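/- arXiv:0912.3097 — 8 statements merged into one kernel-verified Lean document; each statement's English description precedes it below -/
import Mathlib

section
/- Let n ≥ 1 and let σ be an n-simplex with vertices v₀,…,vₙ in a Euclidean space (a real inner product space), and for each i let τᵢ denote the facet of σ opposite vᵢ. Then σ is n-well-centered if and only if for every i ∈ {0,…,n} the vertex vᵢ lies strictly outside the equatorial ball of τᵢ, i.e., dist(vᵢ, c(τᵢ)) > R(τᵢ). -/
open scoped RealInnerProductSpace
open Finset

variable {E : Type*} [NormedAddCommGroup E] [InnerProductSpace ℝ E]

/-- A simplex is well-centered if its circumcenter is a strictly positive affine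
combination of its vertices. -/
def Affine.Simplex.IsWellCentered {n : ℕ} (s : Affine.Simplex ℝ E n) : Prop :=
  ∃ w : Fin (n + 1) → ℝ, (∑ i, w i) = 1 ∧ (∀ i, 0 < w i) ∧
    Finset.univ.affineCombination ℝ s.points w = s.circumcenter

/-- The facet of a simplex opposite the vertex `i`. -/
def Affine.Simplex.facetOpposite {n : ℕ} (s : Affine.Simplex ℝ E (n + 1))
    (i : Fin (n + 2)) : Affine.Simplex ℝ E n :=
  s.face (fs := {i}ᶜ) (by simp [Finset.card_compl])

namespace EquatorialAux

variable {n : ℕ} (σ : Affine.Simplex ℝ E (n + 1)) (i : Fin (n + 2))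

lemma card_compl_eq : #({i}ᶜ : Finset (Fin (n + 2))) = n + 1 := by
  simp [Finset.card_compl]

lemma facet_eq : σ.facetOpposite i = σ.face (fs := {i}ᶜ) (card_compl_eq i) := rfl

lemma mem_range_facet {j : Fin (n + 2)} (hj : j ≠ i) :
    σ.points j ∈ Set.range (σ.facetOpposite i).points := by
  rw [facet_eq, Affine.Simplex.range_face_points]
  exact ⟨j, by simp [hj], rfl⟩

lemma orth {j : Fin (n + 2)} (hj : j ≠ i) :
    ⟪σ.points j - (σ.facetOpposite i).circumcenter,
      σ.circumcenter - (σ.facetOpposite i).circumcenter⟫ = 0 := by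
  set τ := σ.facetOpposite i with hτ
  have hproj : ((τ.orthogonalProjectionSpan σ.circumcenter : E)) = τ.circumcenter := by
    rw [hτ, facet_eq]
    exact σ.orthogonalProjection_circumcenter (card_compl_eq i)
  have hmem : σ.circumcenter -ᵥ (τ.orthogonalProjectionSpan σ.circumcenter : E)
      ∈ (affineSpan ℝ (Set.range τ.points)).directionᗮ :=
    EuclideanGeometry.vsub_orthogonalProjection_mem_direction_orthogonal _ _
  rw [hproj, vsub_eq_sub] at hmem
  have hdir : σ.points j - τ.circumcenter
      ∈ (affineSpan ℝ (Set.range τ.points)).direction := by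
    rw [← vsub_eq_sub]
    exact AffineSubspace.vsub_mem_direction
      (subset_affineSpan ℝ _ (mem_range_facet σ i hj)) τ.circumcenter_mem_affineSpan
  exact (Submodule.mem_orthogonal _ _).1 hmem _ hdir

lemma star (w : Fin (n + 2) → ℝ) (hw : ∑ j, w j = 1)
    (hc : Finset.univ.affineCombination ℝ σ.points w = σ.circumcenter) :
    ⟪σ.circumcenter - (σ.facetOpposite i).circumcenter,
      σ.circumcenter - (σ.facetOpposite i).circumcenter⟫ =
      w i * ⟪σ.points i - (σ.facetOpposite i).circumcenter,
        σ.circumcenter - (σ.facetOpposite i).circumcenter⟫ := by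
  set τ := σ.facetOpposite i with hτ
  set c := σ.circumcenter with hcdef
  set ci := τ.circumcenter with hcidef
  have h1 : c - ci = ∑ j, w j • (σ.points j - ci) := by
    rw [← hc, Finset.affineCombination_eq_weightedVSubOfPoint_vadd_of_sum_eq_one _ _ _ hw ci]
    simp [Finset.weightedVSubOfPoint_apply, vsub_eq_sub, vadd_eq_add]
  nth_rewrite 1 [h1]
  rw [sum_inner]
  rw [Finset.sum_eq_single i]
  · rw [real_inner_smul_left]
  · intro j _ hj
    rw [real_inner_smul_left, orth σ i hj, mul_zero]
  · intro h; exact absurd (Finset.mem_univ i) h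

lemma keyA :
    dist (σ.points i) (σ.facetOpposite i).circumcenter ^ 2 =
      (σ.facetOpposite i).circumradius ^ 2 +
        2 * ⟪σ.points i - (σ.facetOpposite i).circumcenter,
          σ.circumcenter - (σ.facetOpposite i).circumcenter⟫ := by
  set τ := σ.facetOpposite i with hτ
  set c := σ.circumcenter with hcdef
  set ci := τ.circumcenter with hcidef
  obtain ⟨j, hj⟩ := exists_ne i
  have hjr : dist (σ.points j) ci = τ.circumradius := by
    obtain ⟨k, hk⟩ := mem_range_facet σ i hj
    rw [← hk]
    exact τ.dist_circumcenter_eq_circumradius k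
  have hiR : dist (σ.points i) c = σ.circumradius := σ.dist_circumcenter_eq_circumradius i
  have hjR : dist (σ.points j) c = σ.circumradius := σ.dist_circumcenter_eq_circumradius j
  have hoj := orth σ i hj
  have e1 : σ.points j - c = (σ.points j - ci) - (c - ci) := by abel
  have e2 : σ.points i - c = (σ.points i - ci) - (c - ci) := by abel
  have n1 : ‖σ.points j - c‖ ^ 2 =
      ‖σ.points j - ci‖ ^ 2 - 2 * ⟪σ.points j - ci, c - ci⟫ + ‖c - ci‖ ^ 2 := by
    rw [e1, norm_sub_sq_real]
  have n2 : ‖σ.points i - c‖ ^ 2 =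
      ‖σ.points i - ci‖ ^ 2 - 2 * ⟪σ.points i - ci, c - ci⟫ + ‖c - ci‖ ^ 2 := by
    rw [e2, norm_sub_sq_real]
  rw [dist_eq_norm] at hjr hiR hjR ⊢
  have hd : ‖σ.points i - c‖ ^ 2 = ‖σ.points j - c‖ ^ 2 := by rw [hiR, hjR]
  rw [hoj] at n1
  have : ‖σ.points j - ci‖ ^ 2 = τ.circumradius ^ 2 := by rw [hjr]
  nlinarith [n1, n2, hd, this]

lemma weight_zero (w : Fin (n + 2) → ℝ) (hw : ∑ j, w j = 1)
    (hc : Finset.univ.affineCombination ℝ σ.points w = σ.circumcenter)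
    (hmem : σ.circumcenter ∈ affineSpan ℝ (Set.range (σ.facetOpposite i).points)) :
    w i = 0 := by
  classical
  obtain ⟨w', hw', hc'⟩ := eq_affineCombination_of_mem_affineSpan_of_fintype hmem
  set e := ({i}ᶜ : Finset (Fin (n + 2))).orderEmbOfFin (card_compl_eq i) with he
  set W : Fin (n + 2) → ℝ := Function.extend e w' 0 with hW
  have hWe : ∀ a, W (e a) = w' a := fun a => e.injective.extend_apply w' 0 a
  have hmap : (Finset.univ.map e.toEmbedding) = ({i}ᶜ : Finset (Fin (n + 2))) := by
    ext j
    simp only [Finset.mem_map, Finset.mem_univ, true_and]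
    constructor
    · rintro ⟨a, rfl⟩
      have : e a ∈ Set.range ⇑e := ⟨a, rfl⟩
      rw [he, Finset.range_orderEmbOfFin] at this
      exact this
    · intro hjm
      have : j ∈ Set.range ⇑e := by
        rw [he, Finset.range_orderEmbOfFin]; exact hjm
      obtain ⟨a, ha⟩ := this
      exact ⟨a, ha⟩
  have hfacepts : (σ.facetOpposite i).points = σ.points ∘ ⇑e := rfl
  have hcomb : Finset.univ.affineCombination ℝ σ.points
      (Set.indicator (↑({i}ᶜ : Finset (Fin (n + 2)))) W) = σ.circumcenter := by
    rw [← Finset.affineCombination_indicator_subset W σ.points (Finset.subset_univ _),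
      ← hmap, Finset.affineCombination_map, hc']
    congr 1
    funext a
    exact hWe a
  have hWsum : ∑ j, Set.indicator (↑({i}ᶜ : Finset (Fin (n + 2)))) W j = 1 := by
    rw [Finset.sum_indicator_subset W (Finset.subset_univ ({i}ᶜ : Finset (Fin (n + 2)))),
      ← hmap, Finset.sum_map]
    simpa [hWe] using hw'
  have huniq := (affineIndependent_iff_eq_of_fintype_affineCombination_eq ℝ σ.points).1
    σ.independent w _ hw hWsum (hc.trans hcomb.symm)
  rw [huniq]
  simp [Set.indicator]

end EquatorialAux

open EquatorialAux

/-- **Equatorial Balls Condition**: an `n`-simplex (`n ≥ 1`) is `n`-well-centered iff each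
vertex lies strictly outside the equatorial ball of its opposite facet. -/
theorem isWellCentered_iff_forall_dist_circumcenter_facetOpposite_gt_circumradius
    {n : ℕ} (σ : Affine.Simplex ℝ E (n + 1)) :
    σ.IsWellCentered ↔ ∀ i : Fin (n + 2),
      (σ.facetOpposite i).circumradius <
        dist (σ.points i) (σ.facetOpposite i).circumcenter := by
  constructor
  · rintro ⟨w, hw, hpos, hc⟩ i
    have hs := star σ i w hw hc
    have hA := keyA σ i
    by_cases hcc : σ.circumcenter = (σ.facetOpposite i).circumcenter
    · exfalso
      have hmem : σ.circumcenter ∈ affineSpan ℝ (Set.range (σ.facetOpposite i).points) := by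
        rw [hcc]; exact (σ.facetOpposite i).circumcenter_mem_affineSpan
      exact (hpos i).ne' (weight_zero σ i w hw hc hmem)
    · have hpos' : 0 < ⟪σ.circumcenter - (σ.facetOpposite i).circumcenter,
          σ.circumcenter - (σ.facetOpposite i).circumcenter⟫ :=
        by rw [real_inner_self_eq_norm_sq]
           exact pow_pos (norm_pos_iff.mpr (sub_ne_zero.2 hcc)) 2
      have hinn : 0 < ⟪σ.points i - (σ.facetOpposite i).circumcenter,
          σ.circumcenter - (σ.facetOpposite i).circumcenter⟫ := by
        by_contra hle
        push_neg at hle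
        nlinarith [hpos i, hs, hpos']
      by_contra hle
      push_neg at hle
      have hdn : (0:ℝ) ≤ dist (σ.points i) (σ.facetOpposite i).circumcenter := dist_nonneg
      nlinarith [hA, hinn, hdn, (σ.facetOpposite i).circumradius_nonneg]
  · intro h
    obtain ⟨w, hw, hc'⟩ :=
      eq_affineCombination_of_mem_affineSpan_of_fintype σ.circumcenter_mem_affineSpan
    refine ⟨w, hw, fun i => ?_, hc'.symm⟩
    have hs := star σ i w hw hc'.symm
    have hA := keyA σ i
    have hd := h i
    have hinn : 0 < ⟪σ.points i - (σ.facetOpposite i).circumcenter,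
        σ.circumcenter - (σ.facetOpposite i).circumcenter⟫ := by
      have hdn : (0:ℝ) ≤ dist (σ.points i) (σ.facetOpposite i).circumcenter := dist_nonneg
      nlinarith [hA, hd, (σ.facetOpposite i).circumradius_nonneg, hdn]
    have hcc : σ.circumcenter ≠ (σ.facetOpposite i).circumcenter := by
      intro hcc
      rw [hcc, sub_self, inner_zero_right] at hinn
      exact lt_irrefl _ hinn
    have hpos' : 0 < ⟪σ.circumcenter - (σ.facetOpposite i).circumcenter,
        σ.circumcenter - (σ.facetOpposite i).circumcenter⟫ :=
      by rw [real_inner_self_eq_norm_sq]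
         exact pow_pos (norm_pos_iff.mpr (sub_ne_zero.2 hcc)) 2
    by_contra hle
    push_neg at hle
    nlinarith [hs, hpos', hinn]
end

section
/- Let n ≥ 1, let τ be an (n−1)-simplex in a Euclidean space, and let u be a point not in the affine span of τ, so that σ = u∗τ (the cone of u over τ) is an n-simplex. If σ is n-well-centered, then u lies strictly outside the equatorial ball of τ, i.e., dist(u, c(τ)) > R(τ). -/
open scoped RealInnerProductSpace
open Finset

variable {E : Type*} [NormedAddCommGroup E] [InnerProductSpace ℝ E]

/-!
Write `c` and `c'` for the circumcenters of `σ` and `τ`. As `c` is equidistant from the vertices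
of `τ`, `c'` is its orthogonal projection onto the affine span of `τ`, and comparing the
Pythagorean identities at `u` and at a vertex of `τ` gives
`dist u c' ^ 2 - R(τ) ^ 2 = 2 ⟪u - c', c - c'⟫`.
Pairing `c - c' = ∑ wᵢ (vᵢ - c')` with `c - c'` kills the vertices of `τ`, so
`‖c - c'‖ ^ 2 = w₀ ⟪u - c', c - c'⟫`; since `w₀ > 0`, affine independence keeps `c` off the
span of `τ`, and the right-hand side is positive.
-/

section

variable {V P : Type*} [NormedAddCommGroup V] [InnerProductSpace ℝ V] [MetricSpace P]
  [NormedAddTorsor V P]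

theorem Finset.inner_affineCombination_vsub {ι : Type*} (s : Finset ι) (p : ι → P) {w : ι → ℝ}
    (hw : ∑ i ∈ s, w i = 1) (b : P) (v : V) :
    ⟪s.affineCombination ℝ p w -ᵥ b, v⟫ = ∑ i ∈ s, w i * ⟪p i -ᵥ b, v⟫ := by
  simp only [← s.sum_smul_vsub_const_eq_affineCombination_vsub w p b hw, sum_inner,
    real_inner_smul_left]

theorem dist_sq_eq_dist_sq_sub_two_mul_inner_add_dist_sq (p c b : P) :
    dist p c ^ 2 = dist p b ^ 2 - 2 * ⟪p -ᵥ b, c -ᵥ b⟫ + dist c b ^ 2 := by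
  rw [dist_eq_norm_vsub V, dist_eq_norm_vsub V, dist_eq_norm_vsub V, ← norm_sub_sq_real,
    vsub_sub_vsub_cancel_right]

namespace Affine.Simplex

theorem inner_vsub_circumcenter_eq_zero {n : ℕ} (τ : Simplex ℝ P n) {c : P} {r : ℝ}
    (hc : ∀ i, dist (τ.points i) c = r) {p : P} (hp : p ∈ affineSpan ℝ (Set.range τ.points)) :
    ⟪p -ᵥ τ.circumcenter, c -ᵥ τ.circumcenter⟫ = 0 := by
  rw [← τ.orthogonalProjection_eq_circumcenter_of_dist_eq hc]
  exact Submodule.inner_right_of_mem_orthogonal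
    (EuclideanGeometry.vsub_orthogonalProjection_mem_direction _ hp)
    (EuclideanGeometry.vsub_orthogonalProjection_mem_direction_orthogonal _ c)

theorem dist_sq_sub_circumradius_sq {n : ℕ} (τ : Simplex ℝ P n) {c u : P} {r : ℝ}
    (hc : ∀ i, dist (τ.points i) c = r) (hu : dist u c = r) :
    dist u τ.circumcenter ^ 2 - τ.circumradius ^ 2 =
      2 * ⟪u -ᵥ τ.circumcenter, c -ᵥ τ.circumcenter⟫ := by
  have hvertex := dist_sq_eq_dist_sq_sub_two_mul_inner_add_dist_sq (τ.points 0) c τ.circumcenter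
  have hapex := dist_sq_eq_dist_sq_sub_two_mul_inner_add_dist_sq u c τ.circumcenter
  rw [τ.inner_vsub_circumcenter_eq_zero hc (mem_affineSpan ℝ (Set.mem_range_self 0)),
    τ.dist_circumcenter_eq_circumradius, hc] at hvertex
  rw [hu] at hapex
  linarith

section Cone

variable {n : ℕ} {τ : Simplex ℝ P n} {u : P} {σ : Simplex ℝ P (n + 1)}

theorem dist_circumcenter_eq_circumradius_of_points_eq_cons
    (hσ : σ.points = Fin.cons u τ.points) (i : Fin (n + 1)) :
    dist (τ.points i) σ.circumcenter = σ.circumradius := by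
  simpa [hσ] using σ.dist_circumcenter_eq_circumradius i.succ

theorem image_compl_zero_of_points_eq_cons (hσ : σ.points = Fin.cons u τ.points) :
    σ.points '' {0}ᶜ = Set.range τ.points := by
  rw [hσ, ← Fin.range_succ, ← Set.range_comp, Fin.cons_comp_succ]

theorem norm_circumcenter_vsub_circumcenter_sq_of_points_eq_cons
    (hσ : σ.points = Fin.cons u τ.points) {w : Fin (n + 2) → ℝ} (hw : ∑ i, w i = 1)
    (hc : univ.affineCombination ℝ σ.points w = σ.circumcenter) :
    ‖σ.circumcenter -ᵥ τ.circumcenter‖ ^ 2 =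
      w 0 * ⟪u -ᵥ τ.circumcenter, σ.circumcenter -ᵥ τ.circumcenter⟫ := by
  have hτ := dist_circumcenter_eq_circumradius_of_points_eq_cons hσ
  rw [← real_inner_self_eq_norm_sq]
  nth_rewrite 1 [← hc]
  rw [univ.inner_affineCombination_vsub _ hw, Fin.sum_univ_succ, hσ]
  simp [τ.inner_vsub_circumcenter_eq_zero hτ (mem_affineSpan ℝ (Set.mem_range_self _))]

theorem inner_vsub_circumcenter_pos_of_points_eq_cons
    (hσ : σ.points = Fin.cons u τ.points) {w : Fin (n + 2) → ℝ} (hw : ∑ i, w i = 1)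
    (hw₀ : 0 < w 0) (hc : univ.affineCombination ℝ σ.points w = σ.circumcenter) :
    0 < ⟪u -ᵥ τ.circumcenter, σ.circumcenter -ᵥ τ.circumcenter⟫ := by
  have hnotMem : σ.circumcenter ∉ affineSpan ℝ (Set.range τ.points) := by
    rw [← hc, ← image_compl_zero_of_points_eq_cons hσ]
    exact fun h ↦ hw₀.ne' <| σ.independent.eq_zero_of_affineCombination_mem_affineSpan hw h
      (mem_univ 0) (Set.notMem_compl_iff.2 rfl)
  have hne : σ.circumcenter ≠ τ.circumcenter :=
    fun h ↦ hnotMem (h ▸ τ.circumcenter_mem_affineSpan)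
  have hsq := norm_circumcenter_vsub_circumcenter_sq_of_points_eq_cons hσ hw hc
  have hpos : 0 < ‖σ.circumcenter -ᵥ τ.circumcenter‖ ^ 2 := by
    simpa [sq_pos_iff, vsub_eq_zero_iff_eq] using hne
  exact (mul_pos_iff_of_pos_left hw₀).1 (hsq ▸ hpos)

end Cone

end Affine.Simplex

end

theorem circumradius_lt_dist_of_cone_isWellCentered_general
    {n : ℕ} (τ : Affine.Simplex ℝ E n) (u : E)
    (σ : Affine.Simplex ℝ E (n + 1)) (hσ : σ.points = Fin.cons u τ.points)
    (hwc : σ.IsWellCentered) :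
    τ.circumradius < dist u τ.circumcenter := by
  obtain ⟨w, hw, hwpos, hc⟩ := hwc
  have hinner := Affine.Simplex.inner_vsub_circumcenter_pos_of_points_eq_cons hσ hw (hwpos 0) hc
  have hdist := τ.dist_sq_sub_circumradius_sq
    (Affine.Simplex.dist_circumcenter_eq_circumradius_of_points_eq_cons hσ)
    (by simpa [hσ] using σ.dist_circumcenter_eq_circumradius 0)
  exact lt_of_pow_lt_pow_left₀ 2 dist_nonneg (by linarith)

/-- **One-Facet Equatorial Ball Condition**: if the cone `σ = u ∗ τ` over an
`(n−1)`-simplex `τ` (with apex `u` outside the affine span of `τ`) is `n`-well-centered,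
then `u` lies strictly outside the equatorial ball of `τ`. -/
theorem circumradius_lt_dist_of_cone_isWellCentered
    {n : ℕ} (τ : Affine.Simplex ℝ E n) (u : E)
    (hu : u ∉ affineSpan ℝ (Set.range τ.points))
    (σ : Affine.Simplex ℝ E (n + 1)) (hσ : σ.points = Fin.cons u τ.points)
    (hwc : σ.IsWellCentered) :
    τ.circumradius < dist u τ.circumcenter :=
  circumradius_lt_dist_of_cone_isWellCentered_general τ u σ hσ hwc
end

section
/- Let n ≥ 2 and let σ = [v₀v₁…vₙ] be an n-simplex in a Euclidean space with facets τ₀,…,τₙ (τᵢ opposite vᵢ). Let u be a point of σ (i.e., of the convex hull of v₀,…,vₙ). Then at most one of the n+1 cones u∗τ₀,…,u∗τₙ is an n-well-centered n-simplex; precisely, for any two distinct indices i ≠ j such that u lies in neither the affine span of τᵢ nor the affine span of τⱼ (so that both u∗τᵢ and u∗τⱼ are nondegenerate n-simplices), it is not the case that both u∗τᵢ and u∗τⱼ are n-well-centered. -/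
/-!
The cones `σi` and `σj` share the facet `ρ` with vertices `u` and `vₘ`, `m ≠ i, j`; the vertex
of `σi` opposite `ρ` is `vⱼ`, that of `σj` is `vᵢ`. In a well-centered simplex the foot `q` of
the altitude from a vertex `v` lies strictly inside the circumsphere (centre `o`, radius `r`) of
the opposite facet: if `b > 0` is the barycentric weight of `v` in the circumcenter and `h` the
height, Pythagoras gives `|q - o|² - r² = (2b - 1) h²`, and strict convexity of the ball gives
`b |q - o| < (1 - b) r`; the first settles `b < 1/2`, the second `b ≥ 1/2`.
So `vᵢ` and `vⱼ` project into the open circumball of `ρ`, and the other `vₘ` are vertices of `ρ`.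
Projecting `u = ∑ tₘ vₘ` onto the span of `ρ`, with `tᵢ > 0` because `u` is off the facet
opposite `vᵢ`, puts `u` strictly inside the circumsphere of `ρ`, although `u` is a vertex of `ρ`.
-/

open scoped RealInnerProductSpace
open Finset

variable {E : Type*} [NormedAddCommGroup E] [InnerProductSpace ℝ E]

open EuclideanGeometry

lemma dist_affineCombination_lt_of_dist_le {V P ι : Type*} [NormedAddCommGroup V]
    [NormedSpace ℝ V] [MetricSpace P] [NormedAddTorsor V P] {t : Finset ι} {w : ι → ℝ}
    {p : ι → P} {p₀ : P} {r : ℝ} (h0 : ∀ k ∈ t, 0 ≤ w k) (h1 : ∑ k ∈ t, w k = 1)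
    (hp : ∀ k ∈ t, dist (p k) p₀ ≤ r) {i : ι} (hi : i ∈ t) (hwi : 0 < w i)
    (hpi : dist (p i) p₀ < r) :
    dist (t.affineCombination ℝ p w) p₀ < r := by
  rw [t.affineCombination_eq_weightedVSubOfPoint_vadd_of_sum_eq_one w p h1 p₀,
    t.weightedVSubOfPoint_apply, dist_vadd_left]
  calc ‖∑ k ∈ t, w k • (p k -ᵥ p₀)‖ ≤ ∑ k ∈ t, w k * dist (p k) p₀ := by
        refine (norm_sum_le _ _).trans (Finset.sum_le_sum fun k hk ↦ ?_)
        rw [norm_smul, Real.norm_of_nonneg (h0 k hk), dist_eq_norm_vsub]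
    _ < ∑ k ∈ t, w k * r :=
        Finset.sum_lt_sum (fun k hk ↦ mul_le_mul_of_nonneg_left (hp k hk) (h0 k hk))
          ⟨i, hi, mul_lt_mul_of_pos_left hpi hwi⟩
    _ = r := by rw [← Finset.sum_mul, h1, one_mul]

lemma norm_sum_smul_lt_of_strictConvexSpace {V ι : Type*} [NormedAddCommGroup V]
    [NormedSpace ℝ V] [StrictConvexSpace ℝ V] {t : Finset ι} {w : ι → ℝ} {z : ι → V} {r : ℝ}
    (hw : ∀ k ∈ t, 0 < w k) {i j : ι} (hi : i ∈ t) (hj : j ∈ t) (hij : z i ≠ z j)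
    (hz : ∀ k ∈ t, ‖z k‖ ≤ r) :
    ‖∑ k ∈ t, w k • z k‖ < (∑ k ∈ t, w k) * r := by
  have hpos : 0 < ∑ k ∈ t, w k := Finset.sum_pos hw ⟨i, hi⟩
  have h := centerMass_mem_ball_of_strictConvexSpace (fun k hk ↦ (hw k hk).le) hi hj hij
    (hw i hi).ne' (hw j hj).ne' (p := 0) (fun k hk ↦ mem_closedBall_zero_iff.2 (hz k hk))
  rw [mem_ball_zero_iff, Finset.centerMass, norm_smul, Real.norm_of_nonneg (inv_pos.2 hpos).le,
    inv_mul_lt_iff₀ hpos] at h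
  exact h

variable {V P : Type*} [NormedAddCommGroup V] [InnerProductSpace ℝ V] [MetricSpace P]
  [NormedAddTorsor V P]

namespace EuclideanGeometry

lemma dist_sq_eq_dist_orthogonalProjection_sq_add_norm_sq (S : AffineSubspace ℝ P) [Nonempty S]
    [S.direction.HasOrthogonalProjection] (x y : P) :
    dist x y ^ 2 = dist (orthogonalProjection S x : P) (orthogonalProjection S y) ^ 2 +
      ‖(x -ᵥ orthogonalProjection S x) - (y -ᵥ orthogonalProjection S y)‖ ^ 2 := by
  have hperp : ⟪(orthogonalProjection S x : P) -ᵥ orthogonalProjection S y,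
      (x -ᵥ orthogonalProjection S x) - (y -ᵥ orthogonalProjection S y)⟫ = 0 :=
    Submodule.inner_right_of_mem_orthogonal (AffineSubspace.vsub_mem_direction
      (orthogonalProjection_mem x) (orthogonalProjection_mem y)) (Submodule.sub_mem _
        (vsub_orthogonalProjection_mem_direction_orthogonal S x)
        (vsub_orthogonalProjection_mem_direction_orthogonal S y))
  rw [dist_eq_norm_vsub V, dist_eq_norm_vsub V,
    ← add_sub_cancel ((orthogonalProjection S x : P) -ᵥ orthogonalProjection S y) (x -ᵥ y),
    ← vsub_sub_vsub_comm, norm_add_sq_real, hperp]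
  ring

end EuclideanGeometry

namespace Affine.Simplex

section

variable {k W A : Type*} [Ring k] [Nontrivial k] [AddCommGroup W] [Module k W] [AddTorsor W A]

lemma range_faceOpposite_points_eq_sdiff {n : ℕ} [NeZero n] (s : Simplex k A n)
    (i : Fin (n + 1)) :
    Set.range (s.faceOpposite i).points = Set.range s.points \ {s.points i} := by
  rw [range_faceOpposite_points, Set.compl_eq_univ_sdiff, Set.image_sdiff s.independent.injective,
    Set.image_univ, Set.image_singleton]

lemma exists_range_faceOpposite_points_of_points_eq_cons {n : ℕ} {σ σ' : Simplex k A (n + 1)}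
    {u : A} {i j : Fin (n + 2)} (hσ' : σ'.points = Fin.cons u (σ.faceOpposite i).points)
    (hij : i ≠ j) (hu : u ≠ σ.points j) :
    ∃ p, σ'.points p = σ.points j ∧ Set.range (σ'.faceOpposite p).points =
      insert u (Set.range σ.points \ {σ.points i, σ.points j}) := by
  have hR : Set.range σ'.points = insert u (Set.range σ.points \ {σ.points i}) := by
    rw [hσ', Fin.range_cons, range_faceOpposite_points_eq_sdiff]
  obtain ⟨p, hp⟩ : σ.points j ∈ Set.range σ'.points :=
    hR ▸ Or.inr ⟨⟨j, rfl⟩, σ.independent.injective.ne hij.symm⟩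
  refine ⟨p, hp, ?_⟩
  rw [range_faceOpposite_points_eq_sdiff, hR, hp,
    Set.insert_sdiff_of_notMem _ (Set.notMem_singleton_iff.2 hu), Set.sdiff_sdiff,
    Set.singleton_union, Set.pair_comm]

end

lemma circumradius_eq_of_range_eq {n : ℕ} {s₁ s₂ : Simplex ℝ P n}
    (h : Set.range s₁.points = Set.range s₂.points) : s₁.circumradius = s₂.circumradius := by
  obtain ⟨k, hk⟩ : s₁.points 0 ∈ Set.range s₂.points := h ▸ Set.mem_range_self 0
  rw [← s₁.dist_circumcenter_eq_circumradius 0, circumcenter_eq_of_range_eq h, ← hk,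
    s₂.dist_circumcenter_eq_circumradius]

lemma coe_orthogonalProjectionSpan_affineCombination {n : ℕ} (s : Simplex ℝ P n) {ι : Type*}
    (t : Finset ι) (p : ι → P) {w : ι → ℝ} (hw : ∑ k ∈ t, w k = 1) :
    (s.orthogonalProjectionSpan (t.affineCombination ℝ p w) : P) =
      t.affineCombination ℝ (fun k ↦ (s.orthogonalProjectionSpan (p k) : P)) w :=
  t.map_affineCombination p w hw
    ((affineSpan ℝ (Set.range s.points)).subtype.comp s.orthogonalProjectionSpan.toAffineMap)

lemma dist_circumcenter_eq_circumradius_of_mem_range {n : ℕ} (s : Simplex ℝ P n) {p : P}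
    (hp : p ∈ Set.range s.points) : dist p s.circumcenter = s.circumradius := by
  obtain ⟨k, rfl⟩ := hp
  exact s.dist_circumcenter_eq_circumradius k

lemma affineCombination_notMem_range_points {m : ℕ} (ρ : Simplex ℝ P m) {ι : Type*}
    {t : Finset ι} {w : ι → ℝ} {x : ι → P} (h0 : ∀ k ∈ t, 0 ≤ w k) (h1 : ∑ k ∈ t, w k = 1)
    (hx : ∀ k ∈ t, dist (ρ.orthogonalProjectionSpan (x k) : P) ρ.circumcenter ≤ ρ.circumradius)
    {i : ι} (hi : i ∈ t) (hwi : 0 < w i)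
    (hxi : dist (ρ.orthogonalProjectionSpan (x i) : P) ρ.circumcenter < ρ.circumradius) :
    t.affineCombination ℝ x w ∉ Set.range ρ.points := by
  intro hρ
  have h := dist_affineCombination_lt_of_dist_le h0 h1 hx hi hwi hxi
  rw [← coe_orthogonalProjectionSpan_affineCombination _ _ _ h1, orthogonalProjectionSpan,
    orthogonalProjection_eq_self_iff.2 (mem_affineSpan ℝ hρ),
    dist_circumcenter_eq_circumradius_of_mem_range _ hρ] at h
  exact h.false

lemma circumradius_sq_eq_circumradius_faceOpposite_sq_add_dist_sq {n : ℕ} [NeZero n]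
    (s : Simplex ℝ P n) (l : Fin (n + 1)) :
    s.circumradius ^ 2 = (s.faceOpposite l).circumradius ^ 2 +
      dist s.circumcenter (s.faceOpposite l).circumcenter ^ 2 := by
  set f := s.faceOpposite l
  have hPc : (f.orthogonalProjectionSpan s.circumcenter : P) = f.circumcenter :=
    s.orthogonalProjection_circumcenter _
  have h := f.dist_sq_eq_dist_orthogonalProjection_sq_add_dist_orthogonalProjection_sq
    s.circumcenter (mem_affineSpan ℝ (Set.mem_range_self 0))
  have h0 : dist (f.points 0) s.circumcenter = s.circumradius :=
    s.dist_circumcenter_eq_circumradius _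
  rw [hPc, h0, f.dist_circumcenter_eq_circumradius] at h
  linear_combination h

lemma facetOpposite_eq_faceOpposite {n : ℕ} (s : Simplex ℝ E (n + 1)) (i : Fin (n + 2)) :
    s.facetOpposite i = s.faceOpposite i :=
  rfl

lemma circumcenter_faceOpposite_eq {n : ℕ} [NeZero n] (s : Simplex ℝ E n)
    {w : Fin (n + 1) → ℝ} (hw : ∑ k, w k = 1)
    (hc : univ.affineCombination ℝ s.points w = s.circumcenter) (l : Fin (n + 1)) :
    (s.faceOpposite l).circumcenter =
      w l • s.altitudeFoot l + ∑ k ∈ univ.erase l, w k • s.points k := by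
  have hPc : ((s.faceOpposite l).orthogonalProjectionSpan s.circumcenter : E) =
      (s.faceOpposite l).circumcenter := s.orthogonalProjection_circumcenter _
  rw [← hPc, ← hc, coe_orthogonalProjectionSpan_affineCombination _ _ _ hw,
    univ.affineCombination_eq_linear_combination _ _ hw, ← univ.add_sum_erase _ (mem_univ l)]
  refine congrArg _ (sum_congr rfl fun k hk ↦ ?_)
  rw [orthogonalProjectionSpan, orthogonalProjection_eq_self_iff.2
    (s.points_mem_affineSpan_faceOpposite.2 (ne_of_mem_erase hk))]

lemma mul_dist_altitudeFoot_circumcenter_faceOpposite_lt {n : ℕ} (s : Simplex ℝ E (n + 2))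
    {w : Fin (n + 3) → ℝ} (hw1 : ∑ k, w k = 1) (hw : ∀ k, 0 < w k)
    (hc : univ.affineCombination ℝ s.points w = s.circumcenter) (l : Fin (n + 3)) :
    w l * dist (s.altitudeFoot l) (s.faceOpposite l).circumcenter <
      (1 - w l) * (s.faceOpposite l).circumradius := by
  set o := (s.faceOpposite l).circumcenter
  have ho : o = _ := s.circumcenter_faceOpposite_eq hw1 hc l
  have hy : ∑ k ∈ univ.erase l, w k = 1 - w l := by
    rw [← hw1, ← add_sum_erase _ _ (mem_univ l)]; ring
  have h : w l • (s.altitudeFoot l - o) = -∑ k ∈ univ.erase l, w k • (s.points k - o) := by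
    simp only [smul_sub, sum_sub_distrib, ← sum_smul, hy]
    rw [ho]; module
  have h' := congrArg norm h
  rw [norm_smul, Real.norm_of_nonneg (hw l).le, norm_neg] at h'
  rw [dist_eq_norm, h', ← hy]
  obtain ⟨a, ha, b, hb, hab⟩ := one_lt_card.1 (by simp : 1 < #(univ.erase l))
  refine norm_sum_smul_lt_of_strictConvexSpace (fun k _ ↦ hw k) ha hb
    (sub_left_injective.ne (s.independent.injective.ne hab)) fun k hk ↦ ?_
  rw [← dist_eq_norm, dist_circumcenter_eq_circumradius_of_mem_range _ <|
    range_faceOpposite_points_eq_sdiff s l ▸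
      ⟨⟨k, rfl⟩, s.independent.injective.ne (ne_of_mem_erase hk)⟩]

theorem IsWellCentered.dist_altitudeFoot_circumcenter_faceOpposite_lt {n : ℕ}
    {s : Simplex ℝ E (n + 2)} (hs : s.IsWellCentered) (l : Fin (n + 3)) :
    dist (s.altitudeFoot l) (s.faceOpposite l).circumcenter <
      (s.faceOpposite l).circumradius := by
  obtain ⟨w, hw1, hw, hc⟩ := hs
  set f := s.faceOpposite l
  set H := affineSpan ℝ (Set.range f.points)
  set o := f.circumcenter
  set r := f.circumradius
  set v := s.points l
  set q := s.altitudeFoot l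
  set c := s.circumcenter
  set b := w l
  set y := ∑ k ∈ univ.erase l, w k • s.points k
  have hb : 0 < b := hw l
  have hPv : (orthogonalProjection H v : E) = q := rfl
  have hPc : (orthogonalProjection H c : E) = o := s.orthogonalProjection_circumcenter _
  have hc' : c = b • v + y := by
    rw [← hc, univ.affineCombination_eq_linear_combination _ _ hw1,
      ← add_sum_erase _ _ (mem_univ l)]
  have ho : o = b • q + y := s.circumcenter_faceOpposite_eq hw1 hc l
  have hbD : b * dist q o < (1 - b) * r :=
    s.mul_dist_altitudeFoot_circumcenter_faceOpposite_lt hw1 hw hc l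
  have hco : c - o = b • (v - q) := by rw [hc', ho]; module
  have hR₁ : s.circumradius ^ 2 = r ^ 2 + (b * ‖v - q‖) ^ 2 := by
    rw [s.circumradius_sq_eq_circumradius_faceOpposite_sq_add_dist_sq l, dist_eq_norm, hco,
      norm_smul, Real.norm_of_nonneg hb.le]
  have hR₂ : s.circumradius ^ 2 = dist q o ^ 2 + ((1 - b) * ‖v - q‖) ^ 2 := by
    rw [← s.dist_circumcenter_eq_circumradius l,
      dist_sq_eq_dist_orthogonalProjection_sq_add_norm_sq H, hPv, hPc, vsub_eq_sub, vsub_eq_sub,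
      show v - q - (c - o) = (1 - b) • (v - q) by rw [hco]; module,
      norm_smul, mul_pow, Real.norm_eq_abs, sq_abs, mul_pow]
  have hsq : dist q o ^ 2 - r ^ 2 = (2 * b - 1) * ‖v - q‖ ^ 2 := by
    linear_combination hR₁ - hR₂
  have hZ : 0 < ‖v - q‖ := norm_pos_iff.2 (sub_ne_zero.2 (s.ne_altitudeFoot l))
  rcases lt_or_ge (2 * b) 1 with hb' | hb'
  · refine (pow_lt_pow_iff_left₀ dist_nonneg f.circumradius_nonneg two_ne_zero).1 ?_
    nlinarith [pow_pos hZ 2]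
  · exact lt_of_mul_lt_mul_left (hbD.trans_le (by nlinarith [f.circumradius_nonneg])) hb.le

end Affine.Simplex

open Affine.Simplex

/-- For `n ≥ 2`, if `u` is a point of an `n`-simplex `σ`, then no two of the cones of
`u` over the facets of `σ` are both `n`-well-centered. -/
theorem not_both_cones_over_facets_isWellCentered
    {n : ℕ} (σ : Affine.Simplex ℝ E (n + 2)) (u : E)
    (hu : u ∈ convexHull ℝ (Set.range σ.points))
    (i j : Fin (n + 3)) (hij : i ≠ j)
    (hi : u ∉ affineSpan ℝ (Set.range (σ.facetOpposite i).points))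
    (hj : u ∉ affineSpan ℝ (Set.range (σ.facetOpposite j).points))
    (σi : Affine.Simplex ℝ E (n + 2)) (hσi : σi.points = Fin.cons u (σ.facetOpposite i).points)
    (σj : Affine.Simplex ℝ E (n + 2)) (hσj : σj.points = Fin.cons u (σ.facetOpposite j).points) :
    ¬(σi.IsWellCentered ∧ σj.IsWellCentered) := by
  rintro ⟨hWi, hWj⟩
  rw [facetOpposite_eq_faceOpposite] at hi hj hσi hσj
  rw [convexHull_eq_closedInterior] at hu
  obtain ⟨t, ht1, ht01, htu⟩ := hu
  have hti : 0 < t i := (ht01 i).1.lt_of_ne' fun h ↦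
    hi (htu ▸ (affineCombination_mem_affineSpan_faceOpposite_iff ht1).2 h)
  obtain ⟨p, hp, hρ⟩ := exists_range_faceOpposite_points_of_points_eq_cons hσi hij
    fun h ↦ hi (h ▸ σ.points_mem_affineSpan_faceOpposite.2 hij.symm)
  obtain ⟨p', hp', hρ'⟩ := exists_range_faceOpposite_points_of_points_eq_cons hσj hij.symm
    fun h ↦ hj (h ▸ σ.points_mem_affineSpan_faceOpposite.2 hij)
  set ρ := σi.faceOpposite p
  have hρρ' : Set.range (σj.faceOpposite p').points = Set.range ρ.points := by
    rw [hρ, hρ', Set.pair_comm]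
  have hvj := hWi.dist_altitudeFoot_circumcenter_faceOpposite_lt p
  have hvi := hWj.dist_altitudeFoot_circumcenter_faceOpposite_lt p'
  rw [altitudeFoot, hp] at hvj
  rw [altitudeFoot, hp', orthogonalProjectionSpan_congr hρρ' rfl,
    circumcenter_eq_of_range_eq hρρ', circumradius_eq_of_range_eq hρρ'] at hvi
  refine ρ.affineCombination_notMem_range_points (fun k _ ↦ (ht01 k).1) ht1 (fun k _ ↦ ?_)
    (mem_univ i) hti hvi (htu ▸ hρ ▸ Set.mem_insert u _)
  rcases eq_or_ne k i with rfl | hki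
  · exact hvi.le
  rcases eq_or_ne k j with rfl | hkj
  · exact hvj.le
  have hk : σ.points k ∈ Set.range ρ.points := hρ ▸ Set.mem_insert_of_mem _
    ⟨⟨k, rfl⟩, by simp [σ.independent.injective.eq_iff, hki, hkj]⟩
  rw [orthogonalProjectionSpan, orthogonalProjection_eq_self_iff.2 (mem_affineSpan ℝ hk),
    dist_circumcenter_eq_circumradius_of_mem_range _ hk]
end

section
/- Let v₀,…,vₙ be points (regarded as vectors) in a real inner product space and let A be the associated (n+2)×(n+2) circumcenter-system matrix. Let G be the n×n Gram matrix with entries G_{jk} = ⟨vⱼ − v₀, vₖ − v₀⟩ for 1 ≤ j,k ≤ n. Then det(A) = −2ⁿ · det(G). In particular det(A) ≤ 0 always, and det(A) < 0 whenever v₀,…,vₙ are affinely independent. (When the points lie in ℝⁿ, det(G) = det(V)², where V is the n×n matrix whose columns are v₁−v₀,…,vₙ−v₀.) -/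
open scoped RealInnerProductSpace
open Finset

variable {F : Type*} [NormedAddCommGroup F] [InnerProductSpace ℝ F]

/-- The `(n+2) × (n+2)` circumcenter-system matrix of the points `v₀, …, vₙ`:
`A i j = 2⟪vᵢ, vⱼ⟫` for `i, j ≤ n`, the last row and column are `1` except for a `0`
in the corner. -/
def circMatrix {n : ℕ} (v : Fin (n + 1) → F) : Matrix (Fin (n + 2)) (Fin (n + 2)) ℝ :=
  Matrix.of fun i j =>
    if hi : i = Fin.last (n + 1) then (if j = Fin.last (n + 1) then 0 else 1)
    else if hj : j = Fin.last (n + 1) then 1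
    else 2 * ⟪v (i.castPred hi), v (j.castPred hj)⟫

/-- The Gram matrix of the vectors `v₁ − v₀, …, vₙ − v₀`. -/
def gramMatrix {n : ℕ} (v : Fin (n + 1) → F) : Matrix (Fin n) (Fin n) ℝ :=
  Matrix.of fun j k => ⟪v j.succ - v 0, v k.succ - v 0⟫

/-!
Reorder the indices so that the row and column of `v₀` and the border row and column form the
lower-right block `!![2⟪v₀, v₀⟫, 1; 1, 0]`. That block has determinant `-1` and is invertible over
any commutative ring, and its Schur complement has entries
`2⟪vⱼ, vₖ⟫ - 2⟪vⱼ, v₀⟫ - 2⟪v₀, vₖ⟫ + 2⟪v₀, v₀⟫ = 2⟪vⱼ - v₀, vₖ - v₀⟫`, i.e. it is twice the Gram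
matrix of the edge vectors. The sign statements then follow because a Gram matrix is positive
semidefinite, and positive definite when the vectors are linearly independent.
-/

open Matrix

theorem AffineIndependent.linearIndependent_vsub_succ {k V P : Type*} [Ring k] [AddCommGroup V]
    [Module k V] [AddTorsor V P] {n : ℕ} {p : Fin (n + 1) → P} (hp : AffineIndependent k p) :
    LinearIndependent k fun j : Fin n => p j.succ -ᵥ p 0 := by
  have := (affineIndependent_iff_linearIndependent_vsub k p 0).mp hp
  simpa [Function.comp_def, finSuccAboveEquiv_apply] using
    this.comp _ (finSuccAboveEquiv 0).injective

theorem det_fromBlocks_border {ι R : Type*} [Fintype ι] [DecidableEq ι] [CommRing R]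
    (A : Matrix ι ι R) (b c : ι → R) (d : R) :
    (fromBlocks A (of fun i => ![c i, 1]) (of ![b, 1]) !![d, 1; 1, 0]).det =
      -(A - of fun i j => c i + b j - d).det := by
  let _ : Invertible !![d, 1; 1, (0 : R)] :=
    ⟨!![0, 1; 1, -d], by ext i j; fin_cases i <;> fin_cases j <;> simp,
      by ext i j; fin_cases i <;> fin_cases j <;> simp⟩
  rw [det_fromBlocks₂₂, det_fin_two_of, show ⅟!![d, 1; 1, (0 : R)] = !![0, 1; 1, -d] from rfl]
  have hcorrection : (of fun i => ![c i, 1]) * !![0, 1; 1, -d] * of ![b, 1] =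
      of fun i j => c i + b j - d := by
    ext i j
    simp [Matrix.mul_apply, Fin.sum_univ_two]
    ring
  rw [hcorrection]
  ring

def circIndexEquiv (n : ℕ) : Fin n ⊕ Fin 2 ≃ Fin (n + 2) :=
  finSumFinEquiv.trans (Fin.cycleRange (Fin.last n).castSucc)

@[simp]
theorem circIndexEquiv_inl {n : ℕ} (k : Fin n) :
    circIndexEquiv n (.inl k) = k.succ.castSucc :=
  Fin.ext <| Fin.coe_cycleRange_of_lt (Fin.lt_def.2 (by simp))

@[simp]
theorem circIndexEquiv_inr_zero {n : ℕ} : circIndexEquiv n (.inr 0) = 0 :=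
  Fin.cycleRange_of_eq (Fin.ext (by simp))

@[simp]
theorem circIndexEquiv_inr_one {n : ℕ} : circIndexEquiv n (.inr 1) = Fin.last (n + 1) :=
  Fin.cycleRange_of_gt (Fin.lt_def.2 (by simp))

section

variable {n : ℕ} (v : Fin (n + 1) → F)

theorem circMatrix_submatrix_circIndexEquiv :
    (circMatrix v).submatrix (circIndexEquiv n) (circIndexEquiv n) =
      fromBlocks (of fun j k => 2 * ⟪v j.succ, v k.succ⟫) (of fun j => ![2 * ⟪v j.succ, v 0⟫, 1])
        (of ![fun k => 2 * ⟪v 0, v k.succ⟫, 1]) !![2 * ⟪v 0, v 0⟫, 1; 1, 0] := by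
  ext (j | a) (k | b)
  · simp [circMatrix, ← Fin.succ_castPred_eq_castPred_succ]
  · fin_cases b <;> simp [circMatrix, ← Fin.succ_castPred_eq_castPred_succ]
  · fin_cases a <;> simp [circMatrix, ← Fin.succ_castPred_eq_castPred_succ]
  · fin_cases a <;> fin_cases b <;> simp [circMatrix]

theorem det_circMatrix_eq : (circMatrix v).det = -(2 ^ n) * (gramMatrix v).det := by
  have hschur : (of fun j k => 2 * ⟪v j.succ, v k.succ⟫) -
      (of fun j k => 2 * ⟪v j.succ, v 0⟫ + 2 * ⟪v 0, v k.succ⟫ - 2 * ⟪v 0, v 0⟫) =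
      (2 : ℝ) • gramMatrix v := by
    ext j k
    simp only [gramMatrix, Matrix.sub_apply, Matrix.smul_apply, of_apply, inner_sub_left,
      inner_sub_right, real_inner_comm (v 0), smul_eq_mul]
    ring
  rw [← det_submatrix_equiv_self (circIndexEquiv n), circMatrix_submatrix_circIndexEquiv,
    det_fromBlocks_border, hschur, det_smul, Fintype.card_fin, neg_mul]

theorem gramMatrix_eq_gram : gramMatrix v = gram ℝ fun j => v j.succ - v 0 := rfl

end

/-- The determinant of the circumcenter-system matrix equals `−2ⁿ` times the determinant
of the Gram matrix of the edge vectors at `v₀`; in particular it is always `≤ 0`, and it is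
`< 0` when the points are affinely independent. -/
theorem det_circMatrix {n : ℕ} (v : Fin (n + 1) → F) :
    (circMatrix v).det = -(2 ^ n) * (gramMatrix v).det ∧
    (circMatrix v).det ≤ 0 ∧
    (AffineIndependent ℝ v → (circMatrix v).det < 0) := by
  have h2n : (0 : ℝ) < 2 ^ n := by positivity
  refine ⟨det_circMatrix_eq v, ?_, fun hv => ?_⟩
  · rw [det_circMatrix_eq, gramMatrix_eq_gram]
    exact mul_nonpos_of_nonpos_of_nonneg (neg_nonpos.2 h2n.le) (posSemidef_gram ℝ _).det_nonneg
  · rw [det_circMatrix_eq, gramMatrix_eq_gram]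
    exact mul_neg_of_neg_of_pos (neg_neg_iff_pos.2 h2n)
      (posDef_gram_of_linearIndependent hv.linearIndependent_vsub_succ).det_pos
end

section
/- Let n ≥ 2, let u be a point in a Euclidean space, and let τ be an (n−1)-simplex all of whose vertices lie at distance exactly 1 from u. If τ is (n−1)-well-centered and the distance from u to the affine span of τ is strictly greater than 1/√2, then u does not lie in the affine span of τ and the cone σ = u∗τ is an n-well-centered n-simplex. -/
open scoped RealInnerProductSpace
open Finset

variable {E : Type*} [NormedAddCommGroup E] [InnerProductSpace ℝ E]

/-- If all vertices of an `(n−1)`-well-centered `(n−1)`-simplex `τ` (`n ≥ 2`) lie at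
distance `1` from `u`, and the distance from `u` to the affine span of `τ` exceeds
`1/√2`, then `u` is not in the affine span of `τ` and the cone `σ = u ∗ τ` is an
`n`-well-centered `n`-simplex. -/
theorem cone_isWellCentered_of_isosceles
    {m : ℕ} (u : E) (τ : Affine.Simplex ℝ E (m + 1))
    (hdist : ∀ i, dist (τ.points i) u = 1)
    (hτ : τ.IsWellCentered)
    (hfar : 1 / Real.sqrt 2 <
      Metric.infDist u (affineSpan ℝ (Set.range τ.points) : Set E)) :
    u ∉ affineSpan ℝ (Set.range τ.points) ∧
    ∀ σ : Affine.Simplex ℝ E (m + 2), σ.points = Fin.cons u τ.points →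
      σ.IsWellCentered := by
  obtain ⟨w, hw1, hwpos, hwc⟩ := hτ
  set S := affineSpan ℝ (Set.range τ.points) with hS
  set c := τ.circumcenter with hcdef
  have hcS : c ∈ S := τ.circumcenter_mem_affineSpan
  have hproj : ↑(τ.orthogonalProjectionSpan u) = c :=
    τ.orthogonalProjection_eq_circumcenter_of_dist_eq hdist
  have hperp : u - c ∈ S.directionᗮ := by
    have h := EuclideanGeometry.orthogonalProjection_vsub_mem_direction_orthogonal S u
    have h2 : ((EuclideanGeometry.orthogonalProjection S u : E)) = c := hproj
    rw [h2, vsub_eq_sub] at h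
    have := Submodule.neg_mem _ h
    rwa [neg_sub] at this
  set d := dist u c with hddef
  have hd : 1 / Real.sqrt 2 < d := lt_of_lt_of_le hfar (Metric.infDist_le_dist_of_mem hcS)
  have hsq2 : (1 / Real.sqrt 2 : ℝ)^2 = 1/2 := by
    rw [div_pow, one_pow, Real.sq_sqrt (by norm_num : (0:ℝ) ≤ 2)]
  have h0 : (0:ℝ) < 1 / Real.sqrt 2 := by positivity
  have hd2 : 1/2 < d^2 := by
    calc (1:ℝ)/2 = (1 / Real.sqrt 2)^2 := hsq2.symm
    _ < d^2 := by apply pow_lt_pow_left₀ hd h0.le; norm_num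
  set R := τ.circumradius with hRdef
  have hR2 : d * d = 1 * 1 - R * R := by
    have := τ.dist_circumcenter_sq_eq_sq_sub_circumradius hdist hproj
      (mem_affineSpan ℝ (Set.mem_range_self 0))
    exact this
  constructor
  · intro hu
    have : Metric.infDist u (S : Set E) = 0 := Metric.infDist_zero_of_mem hu
    rw [this] at hfar
    linarith
  intro σ hσ
  set s : ℝ := (2 * d^2 - 1) / (2 * d^2) with hsdef
  have hdpos : (0:ℝ) < d^2 := by linarith
  have hs0 : 0 < s := div_pos (by linarith) (by linarith)
  have hs1 : s < 1 := (div_lt_one (by linarith)).2 (by linarith)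
  have hseq : s * (2 * d^2) = 2 * d^2 - 1 := by
    rw [hsdef, div_mul_cancel₀]; linarith
  set W : Fin (m + 3) → ℝ := Fin.cons s (fun i => (1 - s) * w i) with hWdef
  have hW1 : (∑ i, W i) = 1 := by
    rw [Fin.sum_univ_succ]
    simp only [hWdef, Fin.cons_zero, Fin.cons_succ]
    rw [← Finset.mul_sum, hw1]
    ring
  have hWpos : ∀ i, 0 < W i := by
    intro i
    refine Fin.cases ?_ ?_ i
    · simpa [hWdef] using hs0
    · intro j
      simp only [hWdef, Fin.cons_succ]
      exact mul_pos (by linarith) (hwpos j)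
  have hc_lin : (c : E) = ∑ i, w i • τ.points i := by
    rw [← hwc, Finset.univ.affineCombination_eq_linear_combination _ _ hw1]
  set q : E := s • u + (1 - s) • c with hqdef
  have hcomb : Finset.univ.affineCombination ℝ σ.points W = q := by
    rw [Finset.univ.affineCombination_eq_linear_combination _ _ hW1, hσ]
    rw [Fin.sum_univ_succ]
    simp only [hWdef, Fin.cons_zero, Fin.cons_succ]
    rw [hqdef, hc_lin, Finset.smul_sum]
    congr 1
    exact Finset.sum_congr rfl fun i _ => mul_smul _ _ _
  have hqspan : q ∈ affineSpan ℝ (Set.range σ.points) := by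
    rw [← hcomb]
    exact affineCombination_mem_affineSpan hW1 σ.points
  have hucd : ‖u - c‖ = d := by rw [hddef, dist_eq_norm]
  have hqu : dist q u = (1 - s) * d := by
    have hq : q - u = (1 - s) • (c - u) := by
      rw [hqdef]; module
    rw [dist_eq_norm, hq, norm_smul, Real.norm_eq_abs,
      abs_of_nonneg (by linarith : (0:ℝ) ≤ 1 - s), norm_sub_rev, hucd]
  have hqv : ∀ i, dist q (τ.points i) = (1 - s) * d := by
    intro i
    have hvmem : (c : E) - τ.points i ∈ S.direction := by
      have := AffineSubspace.vsub_mem_direction hcS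
        (mem_affineSpan ℝ (Set.mem_range_self i))
      simpa [vsub_eq_sub] using this
    have hinner : ⟪u - c, c - τ.points i⟫ = 0 := by
      rw [real_inner_comm]
      exact Submodule.inner_right_of_mem_orthogonal hvmem hperp
    have hq : q - τ.points i = s • (u - c) + (c - τ.points i) := by
      rw [hqdef]; module
    have hcv : ‖(c : E) - τ.points i‖ = R := by
      rw [← dist_eq_norm, hRdef]
      exact τ.dist_circumcenter_eq_circumradius' i
    have hsq : (dist q (τ.points i))^2 = s^2 * d^2 + R^2 := by
      rw [dist_eq_norm, hq, norm_add_sq_real, real_inner_smul_left, hinner, norm_smul,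
        Real.norm_eq_abs, hucd, hcv, abs_of_nonneg hs0.le]
      ring
    have hkey : s^2 * d^2 + R^2 = ((1 - s) * d)^2 := by linear_combination hseq + hR2
    have h1 : (0:ℝ) ≤ (1 - s) * d := by
      apply mul_nonneg (by linarith)
      rw [hddef]; exact dist_nonneg
    calc dist q (τ.points i) = Real.sqrt ((dist q (τ.points i))^2) :=
          (Real.sqrt_sq dist_nonneg).symm
      _ = Real.sqrt (((1 - s) * d)^2) := by rw [hsq, hkey]
      _ = (1 - s) * d := Real.sqrt_sq h1
  refine ⟨W, hW1, hWpos, ?_⟩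
  rw [hcomb]
  apply σ.eq_circumcenter_of_dist_eq hqspan (r := (1 - s) * d)
  intro i
  refine Fin.cases ?_ ?_ i
  · rw [hσ, Fin.cons_zero, dist_comm]; exact hqu
  · intro j
    rw [hσ, Fin.cons_succ, dist_comm]
    exact hqv j
end

section
/- Let n ≥ 2, let u be a point in a Euclidean space, and let τ be an (n−1)-simplex all of whose vertices lie at distance exactly 1 from u, such that the distance from u to the affine span of τ is strictly greater than 1/√2. If τ is completely well-centered (every face of τ with at least two vertices is well-centered), then the cone σ = u∗τ is a completely well-centered n-simplex: every face of σ with at least two vertices is well-centered. -/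
open scoped RealInnerProductSpace
open Finset

variable {E : Type*} [NormedAddCommGroup E] [InnerProductSpace ℝ E]

/-- A simplex is completely well-centered if every face with at least two vertices
is well-centered. -/
def Affine.Simplex.IsCompletelyWellCentered {n : ℕ} (s : Affine.Simplex ℝ E n) : Prop :=
  ∀ (m : ℕ) (fs : Finset (Fin (n + 1))) (h : fs.card = (m + 1) + 1),
    (s.face h).IsWellCentered

/-!
A face of `u ∗ τ` avoiding `u` is a face of `τ`; a face containing `u` is the cone `u ∗ τ'` over a
face `τ'` of `τ`. Since `u` is equidistant from the vertices of `τ'`, it projects orthogonally onto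
the circumcenter `c'` of `τ'`, so with `d = dist u c'` and `r` the circumradius of `τ'`, Pythagoras
gives `r² + d² = 1`, and the circumcenter of `u ∗ τ'` is the point of the segment `[c', u]` with
parameter `t = (d² - r²) / (2d²)`. As `d` is at least the distance from `u` to the span of `τ`,
`d² > 1/2 > r²`, so `0 < t < 1` and the barycentric weights of `c'` in `τ'`, scaled by `1 - t`,
together with `t` at `u` are positive.
-/

namespace Finset

variable {n k : ℕ} (s : Finset (Fin (n + 1)))

noncomputable def succPreimage : Finset (Fin n) := s.preimage Fin.succ (Fin.succ_injective n).injOn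

@[simp]
lemma mem_succPreimage {j : Fin n} : j ∈ s.succPreimage ↔ j.succ ∈ s := mem_preimage

lemma map_succEmb_succPreimage : s.succPreimage.map (Fin.succEmb n) = s.erase 0 := by
  ext x
  cases x using Fin.cases <;> simp [Fin.succ_ne_zero]

lemma card_succPreimage_of_zero_notMem (h0 : 0 ∉ s) : #s.succPreimage = #s := by
  rw [← card_map (Fin.succEmb n), map_succEmb_succPreimage, erase_eq_of_notMem h0]

lemma card_succPreimage_add_one_of_zero_mem (h0 : 0 ∈ s) : #s.succPreimage + 1 = #s := by
  rw [← card_map (Fin.succEmb n), map_succEmb_succPreimage, card_erase_add_one h0]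

lemma orderEmbOfFin_of_zero_notMem (h : #s = k) (h' : #s.succPreimage = k) :
    ⇑(s.orderEmbOfFin h) = Fin.succ ∘ s.succPreimage.orderEmbOfFin h' :=
  (orderEmbOfFin_unique h (fun i => s.mem_succPreimage.1 (orderEmbOfFin_mem _ h' i))
    (Fin.strictMono_succ.comp (s.succPreimage.orderEmbOfFin h').strictMono)).symm

lemma orderEmbOfFin_of_zero_mem (h0 : 0 ∈ s) (h : #s = k + 1) (h' : #s.succPreimage = k) :
    ⇑(s.orderEmbOfFin h) = Fin.cons 0 (Fin.succ ∘ s.succPreimage.orderEmbOfFin h') := by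
  refine (orderEmbOfFin_unique h (fun i => ?_) ?_).symm
  · cases i using Fin.cases
    · simpa using h0
    · exact s.mem_succPreimage.1 (orderEmbOfFin_mem _ h' _)
  · exact Fin.strictMono_cons.2 ⟨fun _ => Fin.succ_pos _,
      Fin.strictMono_succ.comp (s.succPreimage.orderEmbOfFin h').strictMono⟩

lemma affineCombination_cons (p : Fin (n + 1) → E) (u : E)
    {w : Fin (n + 1) → ℝ} (hw : ∑ i, w i = 1) (t : ℝ) :
    univ.affineCombination ℝ (Fin.cons u p : Fin (n + 2) → E) (Fin.cons t ((1 - t) • w)) =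
      AffineMap.lineMap (univ.affineCombination ℝ p w) u t := by
  have hw' : ∑ i, (Fin.cons t ((1 - t) • w) : Fin (n + 2) → ℝ) i = 1 := by
    simp [Fin.sum_univ_succ, ← mul_sum, hw]
  rw [affineCombination_eq_linear_combination _ _ _ hw,
    affineCombination_eq_linear_combination _ _ _ hw', Fin.sum_univ_succ,
    AffineMap.lineMap_apply_module, smul_sum]
  simp [mul_smul, add_comm]

end Finset

namespace Affine.Simplex

variable {n : ℕ}

lemma isWellCentered_zero_dim (s : Simplex ℝ E 0) : s.IsWellCentered :=
  ⟨fun _ => 1, by simp, fun _ => one_pos, by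
    rw [s.circumcenter_eq_point 0]
    exact affineCombination_of_eq_one_of_eq_zero _ _ _ (mem_univ 0) rfl
      fun j _ hj => absurd (Fin.fin_one_eq_zero j) hj⟩

lemma dist_sq_eq_circumradius_sq_add {s : Simplex ℝ E n} {p : E}
    (hp : ↑(s.orthogonalProjectionSpan p) = s.circumcenter) (i : Fin (n + 1)) :
    dist (s.points i) p ^ 2 = s.circumradius ^ 2 + dist p s.circumcenter ^ 2 := by
  have := s.dist_sq_eq_dist_orthogonalProjection_sq_add_dist_orthogonalProjection_sq p
    (mem_affineSpan ℝ (Set.mem_range_self i))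
  rw [hp, s.dist_circumcenter_eq_circumradius] at this
  linarith

lemma coe_orthogonalProjectionSpan_lineMap {s : Simplex ℝ E n} {p : E}
    (hp : ↑(s.orthogonalProjectionSpan p) = s.circumcenter) (t : ℝ) :
    ↑(s.orthogonalProjectionSpan (AffineMap.lineMap s.circumcenter p t)) = s.circumcenter := by
  have := s.coe_orthogonalProjection_vadd_smul_vsub_orthogonalProjection (r₁ := t) (p := p)
    s.circumcenter_mem_affineSpan
  rwa [hp, ← AffineMap.lineMap_apply] at this

lemma circumradius_lt_dist_circumcenter {s : Simplex ℝ E n} {u : E} {ρ : ℝ}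
    (hdist : ∀ i, dist (s.points i) u = ρ) (hfar : ρ / √2 < dist u s.circumcenter) :
    s.circumradius < dist u s.circumcenter := by
  have hpyth := dist_sq_eq_circumradius_sq_add (s.orthogonalProjection_eq_circumcenter_of_dist_eq
    hdist) 0
  have hρ : 0 ≤ ρ := hdist 0 ▸ dist_nonneg
  have hfar_sq : ρ ^ 2 / 2 < dist u s.circumcenter ^ 2 := by
    simpa [div_pow] using pow_lt_pow_left₀ hfar (by positivity) two_ne_zero
  rw [hdist] at hpyth
  exact lt_of_pow_lt_pow_left₀ 2 dist_nonneg (by linarith)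

variable {τ : Simplex ℝ E n} {σ : Simplex ℝ E (n + 1)} {u : E} {ρ : ℝ}

lemma circumcenter_cone (hσ : σ.points = Fin.cons u τ.points)
    (hdist : ∀ i, dist (τ.points i) u = ρ) (hu : u ≠ τ.circumcenter) :
    σ.circumcenter = AffineMap.lineMap τ.circumcenter u
      ((dist u τ.circumcenter ^ 2 - τ.circumradius ^ 2) / (2 * dist u τ.circumcenter ^ 2)) := by
  set c := τ.circumcenter
  set t := (dist u c ^ 2 - τ.circumradius ^ 2) / (2 * dist u c ^ 2)
  set z := AffineMap.lineMap c u t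
  have hd : dist u c ≠ 0 := dist_ne_zero.2 hu
  have ht : t * (2 * dist u c ^ 2) = dist u c ^ 2 - τ.circumradius ^ 2 :=
    div_mul_cancel₀ _ (by positivity)
  have hproj := τ.orthogonalProjection_eq_circumcenter_of_dist_eq hdist
  have hz : ∀ i, dist (τ.points i) z = dist u z := by
    intro i
    rw [← sq_eq_sq₀ dist_nonneg dist_nonneg, dist_sq_eq_circumradius_sq_add
      (coe_orthogonalProjectionSpan_lineMap hproj t), dist_comm u, dist_lineMap_left,
      dist_lineMap_right, mul_pow, mul_pow, Real.norm_eq_abs, Real.norm_eq_abs, sq_abs, sq_abs,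
      dist_comm c]
    linear_combination ht
  have hzσ : z ∈ affineSpan ℝ (Set.range σ.points) := by
    have hrange : Set.range τ.points ⊆ Set.range σ.points := by
      rintro _ ⟨i, rfl⟩
      exact ⟨i.succ, by simp [hσ]⟩
    exact AffineMap.lineMap_mem t (affineSpan_mono ℝ hrange τ.circumcenter_mem_affineSpan)
      (mem_affineSpan ℝ ⟨0, by simp [hσ]⟩)
  refine (σ.eq_circumcenter_of_dist_eq hzσ (r := dist u z) fun i => ?_).symm
  cases i using Fin.cases <;> simp [hσ, hz]

lemma IsWellCentered.cone (hτ : τ.IsWellCentered) (hσ : σ.points = Fin.cons u τ.points)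
    (hdist : ∀ i, dist (τ.points i) u = ρ) (hr : τ.circumradius < dist u τ.circumcenter) : σ.IsWellCentered := by
  obtain ⟨w, hw1, hwpos, hwc⟩ := hτ
  have hr0 := τ.circumradius_nonneg
  have hd : 0 < dist u τ.circumcenter := hr0.trans_lt hr
  set t := (dist u τ.circumcenter ^ 2 - τ.circumradius ^ 2) / (2 * dist u τ.circumcenter ^ 2)
  have ht0 : 0 < t := div_pos (by nlinarith) (by positivity)
  have ht1 : t < 1 := (div_lt_one (by positivity)).2 (by nlinarith)
  refine ⟨Fin.cons t ((1 - t) • w), by simp [Fin.sum_univ_succ, ← mul_sum, hw1], fun i => ?_, ?_⟩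
  · cases i using Fin.cases
    · simpa using ht0
    · simpa using mul_pos (sub_pos.2 ht1) (hwpos _)
  · rw [hσ, affineCombination_cons _ _ hw1, hwc, circumcenter_cone hσ hdist (dist_pos.1 hd)]

variable {k : ℕ} {fs : Finset (Fin (n + 2))}

lemma face_eq_face_succPreimage (hσ : σ.points = Fin.cons u τ.points) (h : #fs = k + 1)
    (h' : #fs.succPreimage = k + 1) : σ.face h = τ.face h' :=
  ext fun i => by simp [face_points, hσ, fs.orderEmbOfFin_of_zero_notMem h h']

lemma face_points_eq_cons (hσ : σ.points = Fin.cons u τ.points) (h0 : 0 ∈ fs)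
    (h : #fs = k + 1 + 1) (h' : #fs.succPreimage = k + 1) :
    (σ.face h).points = Fin.cons u (τ.face h').points := by
  rw [face_points', face_points', fs.orderEmbOfFin_of_zero_mem h0 h h', hσ, Fin.comp_cons,
    Fin.cons_zero, ← Function.comp_assoc, Fin.cons_comp_succ]

end Affine.Simplex

/-- If all vertices of a completely well-centered `(n−1)`-simplex `τ` (`n ≥ 2`) lie at
distance `1` from `u`, and the distance from `u` to the affine span of `τ` exceeds
`1/√2`, then the cone `σ = u ∗ τ` is a completely well-centered `n`-simplex. -/
theorem cone_isCompletelyWellCentered_of_isosceles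
    {m : ℕ} (u : E) (τ : Affine.Simplex ℝ E (m + 1))
    (hdist : ∀ i, dist (τ.points i) u = 1)
    (hfar : 1 / Real.sqrt 2 <
      Metric.infDist u (affineSpan ℝ (Set.range τ.points) : Set E))
    (hτ : τ.IsCompletelyWellCentered) :
    ∀ σ : Affine.Simplex ℝ E (m + 2), σ.points = Fin.cons u τ.points →
      σ.IsCompletelyWellCentered := by
  intro σ hσ k fs h
  by_cases h0 : 0 ∈ fs
  · have h' : #fs.succPreimage = k + 1 := by
      have := fs.card_succPreimage_add_one_of_zero_mem h0
      omega
    have hdist' : ∀ i, dist ((τ.face h').points i) u = 1 := fun i => hdist _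
    have hτ' : (τ.face h').IsWellCentered := by
      cases k
      · exact Affine.Simplex.isWellCentered_zero_dim _
      · exact hτ _ _ h'
    refine hτ'.cone (Affine.Simplex.face_points_eq_cons hσ h0 h h') hdist'
      ((τ.face h').circumradius_lt_dist_circumcenter hdist' (hfar.trans_le ?_))
    refine Metric.infDist_le_dist_of_mem
      (affineSpan_mono ℝ ?_ (τ.face h').circumcenter_mem_affineSpan)
    exact (τ.range_face_points h').trans_subset (Set.image_subset_range _ _)
  · have h' : #fs.succPreimage = k + 1 + 1 := (fs.card_succPreimage_of_zero_notMem h0).trans h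
    rw [Affine.Simplex.face_eq_face_succPreimage hσ h h']
    exact hτ k _ h'
end

section
/- Let u, v₁, v₂, vᵢ, vⱼ be points in ℝ³ with v₁ ≠ u. Suppose ⟨v₂ − u, v₁ − u⟩ ≤ 0, and that the four inner products ⟨vᵢ − u, v₁ − u⟩, ⟨vⱼ − u, v₁ − u⟩, ⟨vᵢ − u, v₂ − u⟩, ⟨vⱼ − u, v₂ − u⟩ are all strictly positive (i.e., the angles ∠v₁uvᵢ, ∠v₁uvⱼ, ∠v₂uvᵢ, ∠v₂uvⱼ are all acute). Let Pr₁ denote the orthogonal projection onto the plane P₁ through u orthogonal to v₁ − u. Then for every point q in the convex hull of {vᵢ, v₂, vⱼ}, the projection Pr₁(q) satisfies ⟨Pr₁(q) − u, v₂ − u⟩ > 0; that is, the orthogonal projection of the entire triangle [vᵢv₂vⱼ] into P₁ lies in the open halfspace H₂ = {x : ⟨x − u, v₂ − u⟩ > 0}. -/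
open scoped RealInnerProductSpace

/-- If `v₂` lies in the closed halfspace `H′₁` not containing `v₁`, and the angles
`∠ v₁ u vᵢ`, `∠ v₁ u vⱼ`, `∠ v₂ u vᵢ`, `∠ v₂ u vⱼ` are all acute, then the orthogonal
projection of the whole triangle `[vᵢ v₂ vⱼ]` onto the plane `P₁` through `u`
orthogonal to `v₁ − u` lies in the open halfspace `H₂`. -/
theorem proj_triangle_subset_halfspace_of_acute
    (u v₁ v₂ vi vj : EuclideanSpace ℝ (Fin 3)) (h1 : v₁ ≠ u)
    (h2 : ⟪v₂ - u, v₁ - u⟫ ≤ 0)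
    (hi1 : 0 < ⟪vi - u, v₁ - u⟫) (hj1 : 0 < ⟪vj - u, v₁ - u⟫)
    (hi2 : 0 < ⟪vi - u, v₂ - u⟫) (hj2 : 0 < ⟪vj - u, v₂ - u⟫) :
    ∀ q ∈ convexHull ℝ ({vi, v₂, vj} : Set (EuclideanSpace ℝ (Fin 3))),
      0 < ⟪(q - (⟪q - u, v₁ - u⟫ / ‖v₁ - u‖ ^ 2) • (v₁ - u)) - u, v₂ - u⟫ := by
  have hN : (0:ℝ) < ‖v₁ - u‖ ^ 2 :=
    pow_pos (norm_pos_iff.mpr (sub_ne_zero.mpr h1)) 2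
  set c : ℝ := ⟪v₂ - u, v₁ - u⟫ / ‖v₁ - u‖ ^ 2 with hc
  have hcle : c ≤ 0 := div_nonpos_of_nonpos_of_nonneg h2 hN.le
  set w : EuclideanSpace ℝ (Fin 3) := (v₂ - u) - c • (v₁ - u) with hw
  -- key rewriting of the projection inner product
  have key : ∀ q : EuclideanSpace ℝ (Fin 3),
      ⟪(q - (⟪q - u, v₁ - u⟫ / ‖v₁ - u‖ ^ 2) • (v₁ - u)) - u, v₂ - u⟫
        = ⟪q - u, w⟫ := by
    intro q
    have hqe : (q - (⟪q - u, v₁ - u⟫ / ‖v₁ - u‖ ^ 2) • (v₁ - u)) - u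
        = (q - u) - (⟪q - u, v₁ - u⟫ / ‖v₁ - u‖ ^ 2) • (v₁ - u) := by
      abel
    have L : ⟪(q - u) - (⟪q - u, v₁ - u⟫ / ‖v₁ - u‖ ^ 2) • (v₁ - u), v₂ - u⟫
        = ⟪q - u, v₂ - u⟫ - (⟪q - u, v₁ - u⟫ / ‖v₁ - u‖ ^ 2) * ⟪v₁ - u, v₂ - u⟫ := by
      rw [inner_sub_left, real_inner_smul_left]
    have R : ⟪q - u, w⟫ = ⟪q - u, v₂ - u⟫ - c * ⟪q - u, v₁ - u⟫ := by
      rw [hw, inner_sub_right, real_inner_smul_right]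
    rw [hqe, L, R, hc, real_inner_comm (v₁ - u) (v₂ - u)]
    ring
  -- w is nonzero
  have hwne : w ≠ 0 := by
    intro h0
    have hv2 : v₂ - u = c • (v₁ - u) := by
      have := sub_eq_zero.mp h0
      exact this
    have h3 : ⟪vi - u, v₂ - u⟫ = c * ⟪vi - u, v₁ - u⟫ := by
      rw [hv2, real_inner_smul_right]
    have h4 : c * ⟪vi - u, v₁ - u⟫ ≤ 0 :=
      mul_nonpos_of_nonpos_of_nonneg hcle hi1.le
    linarith
  -- orthogonality of w to v₁ - u
  have horth : ⟪v₁ - u, w⟫ = 0 := by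
    rw [hw, inner_sub_right, real_inner_smul_right, hc,
      real_inner_comm (v₁ - u) (v₂ - u), real_inner_self_eq_norm_sq,
      div_mul_cancel₀ _ hN.ne']
    ring
  -- values at the three vertices
  have hvert : ∀ p ∈ ({vi, v₂, vj} : Set (EuclideanSpace ℝ (Fin 3))),
      0 < ⟪p - u, w⟫ := by
    intro p hp
    have hv2w : 0 < ⟪v₂ - u, w⟫ := by
      have hsum : (v₂ - u : EuclideanSpace ℝ (Fin 3)) = w + c • (v₁ - u) := by
        rw [hw]; abel
      have heq : ⟪v₂ - u, w⟫ = ⟪w, w⟫ + c * ⟪v₁ - u, w⟫ := by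
        rw [hsum, inner_add_left, real_inner_smul_left]
      rw [heq, horth, mul_zero, add_zero, real_inner_self_eq_norm_sq]
      exact pow_pos (norm_pos_iff.mpr hwne) 2
    rcases hp with rfl | rfl | rfl
    · rw [hw, inner_sub_right, real_inner_smul_right]
      have h4 : c * ⟪p - u, v₁ - u⟫ ≤ 0 :=
        mul_nonpos_of_nonpos_of_nonneg hcle hi1.le
      linarith
    · exact hv2w
    · rw [hw, inner_sub_right, real_inner_smul_right]
      have h4 : c * ⟪p - u, v₁ - u⟫ ≤ 0 :=
        mul_nonpos_of_nonpos_of_nonneg hcle hj1.le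
      linarith
  -- the open halfspace is convex
  have hconv : Convex ℝ {q : EuclideanSpace ℝ (Fin 3) | 0 < ⟪q - u, w⟫} := by
    intro x hx y hy a b ha hb hab
    simp only [Set.mem_setOf_eq] at hx hy ⊢
    have hu : a • u + b • u = u := by rw [← add_smul, hab, one_smul]
    have hcomb : (a • x + b • y) - u = a • (x - u) + b • (y - u) := by
      calc (a • x + b • y) - u = a • x + b • y - (a • u + b • u) := by rw [hu]
        _ = a • (x - u) + b • (y - u) := by rw [smul_sub, smul_sub]; abel
    rw [hcomb, inner_add_left, real_inner_smul_left, real_inner_smul_left]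
    rcases ha.lt_or_eq with ha' | ha'
    · exact add_pos_of_pos_of_nonneg (mul_pos ha' hx) (mul_nonneg hb hy.le)
    · have hb1 : b = 1 := by linarith
      rw [← ha', hb1, zero_mul, one_mul, zero_add]
      exact hy
  intro q hq
  rw [key q]
  exact convexHull_min hvert hconv hq
end

section
/- Let u, v₁, v₂, v₃, vⱼ be points in ℝ³ with v₁ ≠ u. Suppose ⟨v₂ − u, v₁ − u⟩ < 0 and ⟨v₃ − u, v₁ − u⟩ < 0, while ⟨vⱼ − u, v₁ − u⟩ > 0, ⟨vⱼ − u, v₂ − u⟩ > 0, and ⟨vⱼ − u, v₃ − u⟩ > 0. Let Pr₁ denote the orthogonal projection onto the plane P₁ through u orthogonal to v₁ − u. Then u does not belong to the image under Pr₁ of the convex hull of {v₂, v₃, vⱼ}; that is, the orthogonal projection of the triangle [v₂v₃vⱼ] into P₁ does not contain the point u. -/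
open scoped RealInnerProductSpace

/-- If `⟪v₂ − u, v₁ − u⟫ < 0`, `⟪v₃ − u, v₁ − u⟫ < 0`, while `⟪vⱼ − u, v₁ − u⟫`,
`⟪vⱼ − u, v₂ − u⟫` and `⟪vⱼ − u, v₃ − u⟫` are all positive, then the orthogonal
projection of the triangle `[v₂ v₃ vⱼ]` onto the plane `P₁` through `u` orthogonal to
`v₁ − u` does not contain the point `u`. -/
theorem not_mem_proj_triangle
    (u v₁ v₂ v₃ vj : EuclideanSpace ℝ (Fin 3)) (h1 : v₁ ≠ u)
    (h2 : ⟪v₂ - u, v₁ - u⟫ < 0) (h3 : ⟪v₃ - u, v₁ - u⟫ < 0)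
    (hj1 : 0 < ⟪vj - u, v₁ - u⟫)
    (hj2 : 0 < ⟪vj - u, v₂ - u⟫)
    (hj3 : 0 < ⟪vj - u, v₃ - u⟫) :
    u ∉ (fun x => x - (⟪x - u, v₁ - u⟫ / ‖v₁ - u‖ ^ 2) • (v₁ - u)) ''
      (convexHull ℝ ({v₂, v₃, vj} : Set (EuclideanSpace ℝ (Fin 3)))) := by
  rintro ⟨x, hx, hPr⟩
  -- extract convex combination
  rw [show ({v₂, v₃, vj} : Set (EuclideanSpace ℝ (Fin 3))) = insert v₂ {v₃, vj} from rfl,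
    convexHull_insert ⟨v₃, Or.inl rfl⟩, convexHull_pair, mem_convexJoin] at hx
  obtain ⟨p, hp, z, hz, hxz⟩ := hx
  rw [Set.mem_singleton_iff] at hp
  rw [hp] at hxz
  rw [segment_eq_image₂] at hz hxz
  obtain ⟨⟨b', c'⟩, ⟨hb', hc', hbc'⟩, rfl⟩ := hz
  obtain ⟨⟨a, r⟩, ⟨ha, hr, har⟩, rfl⟩ := hxz
  simp only at hPr ha hr har hb' hc' hbc' ⊢
  set w1 := v₁ - u with hw1
  set w2 := v₂ - u with hw2
  set w3 := v₃ - u with hw3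
  set wj := vj - u with hwj
  set x := a • v₂ + r • (b' • v₃ + c' • vj) with hxdef
  set b := r * b' with hb
  set c := r * c' with hc
  have hb0 : 0 ≤ b := mul_nonneg hr hb'
  have hc0 : 0 ≤ c := mul_nonneg hr hc'
  have habc : a + b + c = 1 := by
    have : b + c = r := by rw [hb, hc, ← mul_add, hbc', mul_one]
    linarith
  have hxu : x - u = a • w2 + b • w3 + c • wj := by
    have hu : u = a • u + (r * b') • u + (r * c') • u := by
      rw [← add_smul, ← add_smul, ← hb, ← hc, habc, one_smul]
    rw [hxdef, hw2, hw3, hwj, hb, hc]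
    nth_rewrite 1 [hu]
    simp only [smul_sub, smul_add, mul_smul]
    abel
  set t := ⟪x - u, w1⟫ / ‖w1‖ ^ 2 with ht
  have heq : a • w2 + b • w3 + c • wj = t • w1 := by
    rw [← hxu, ← hPr]; abel
  have hw1ne : w1 ≠ 0 := by rw [hw1]; exact sub_ne_zero.mpr h1
  clear hPr hxu hxdef ht hw1 hw2 hw3 hwj hb hc
  clear_value t x b c w1 w2 w3 wj
  clear x
  -- scalar equations
  have inner_eq : ∀ y : EuclideanSpace ℝ (Fin 3),
      a * ⟪w2, y⟫ + b * ⟪w3, y⟫ + c * ⟪wj, y⟫ = t * ⟪w1, y⟫ := by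
    intro y
    have h := congrArg (fun v => ⟪v, y⟫) heq
    rw [inner_add_left, inner_add_left, real_inner_smul_left, real_inner_smul_left,
      real_inner_smul_left, real_inner_smul_left] at h
    exact h
  have E1 := inner_eq w1
  have E2 := inner_eq w2
  have E3 := inner_eq w3
  have Ej := inner_eq wj
  have q1 : (0:ℝ) < ⟪w1, w1⟫ := by
    rw [real_inner_self_eq_norm_sq]
    have : 0 < ‖w1‖ := norm_pos_iff.mpr hw1ne
    positivity
  have hwjne : wj ≠ 0 := by
    intro h; rw [h, inner_zero_left] at hj1; exact lt_irrefl 0 hj1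
  have qj : (0:ℝ) < ⟪wj, wj⟫ := by
    rw [real_inner_self_eq_norm_sq]
    have : 0 < ‖wj‖ := norm_pos_iff.mpr hwjne
    positivity
  -- symmetric inner products
  have s12 : ⟪w1, w2⟫ = ⟪w2, w1⟫ := real_inner_comm _ _
  have s13 : ⟪w1, w3⟫ = ⟪w3, w1⟫ := real_inner_comm _ _
  have s1j : ⟪w1, wj⟫ = ⟪wj, w1⟫ := real_inner_comm _ _
  have s2j : ⟪w2, wj⟫ = ⟪wj, w2⟫ := real_inner_comm _ _
  have s3j : ⟪w3, wj⟫ = ⟪wj, w3⟫ := real_inner_comm _ _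
  -- step 1: t > 0
  have hEjpos : 0 < a * ⟪w2, wj⟫ + b * ⟪w3, wj⟫ + c * ⟪wj, wj⟫ := by
    have h1' : 0 ≤ a * ⟪w2, wj⟫ := mul_nonneg ha (by rw [s2j]; exact hj2.le)
    have h2' : 0 ≤ b * ⟪w3, wj⟫ := mul_nonneg hb0 (by rw [s3j]; exact hj3.le)
    rcases lt_or_eq_of_le hc0 with hcp | hcz
    · have : 0 < c * ⟪wj, wj⟫ := mul_pos hcp qj
      linarith
    · rcases lt_or_eq_of_le ha with hap | haz
      · have : 0 < a * ⟪w2, wj⟫ := mul_pos hap (by rw [s2j]; exact hj2)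
        have h3' : 0 ≤ c * ⟪wj, wj⟫ := mul_nonneg hc0 qj.le
        linarith
      · have hbp : 0 < b := by linarith
        have : 0 < b * ⟪w3, wj⟫ := mul_pos hbp (by rw [s3j]; exact hj3)
        have h3' : 0 ≤ c * ⟪wj, wj⟫ := mul_nonneg hc0 qj.le
        linarith
  have ht0 : 0 < t := by
    rw [Ej, s1j] at hEjpos
    by_contra hn
    push_neg at hn
    nlinarith
  -- step 2: c > 0
  have hcpos : 0 < c := by
    by_contra hcn
    have hcz : c = 0 := le_antisymm (not_lt.mp hcn) hc0
    have hle : a * ⟪w2, w1⟫ + b * ⟪w3, w1⟫ ≤ 0 := by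
      have := mul_nonpos_of_nonneg_of_nonpos ha h2.le
      have := mul_nonpos_of_nonneg_of_nonpos hb0 h3.le
      linarith
    rw [hcz] at E1
    have := mul_pos ht0 q1
    linarith
  -- step 3: final contradiction
  rcases lt_or_eq_of_le (by linarith : (0:ℝ) ≤ a + b) with habp | habz
  · -- a*E2 + b*E3
    have key : a * (a * ⟪w2, w2⟫ + b * ⟪w3, w2⟫ + c * ⟪wj, w2⟫) +
        b * (a * ⟪w2, w3⟫ + b * ⟪w3, w3⟫ + c * ⟪wj, w3⟫) =
        t * (a * ⟪w1, w2⟫ + b * ⟪w1, w3⟫) := by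
      rw [E2, E3]; ring
    have hnn : (0:ℝ) ≤ ⟪a • w2 + b • w3, a • w2 + b • w3⟫ := real_inner_self_nonneg
    have hexp : ⟪a • w2 + b • w3, a • w2 + b • w3⟫ =
        a * (a * ⟪w2, w2⟫ + b * ⟪w3, w2⟫) + b * (a * ⟪w2, w3⟫ + b * ⟪w3, w3⟫) := by
      simp only [inner_add_left, inner_add_right, real_inner_smul_left, real_inner_smul_right]
      ring
    have hnn' : (0:ℝ) ≤ a * (a * ⟪w2, w2⟫ + b * ⟪w3, w2⟫) +
        b * (a * ⟪w2, w3⟫ + b * ⟪w3, w3⟫) := by rw [← hexp]; exact hnn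
    have hrhs : t * (a * ⟪w1, w2⟫ + b * ⟪w1, w3⟫) < 0 := by
      rcases lt_or_eq_of_le ha with hap | haz
      · have hlt : a * ⟪w1, w2⟫ < 0 := by rw [s12]; exact mul_neg_of_pos_of_neg hap h2
        have h2' : b * ⟪w1, w3⟫ ≤ 0 := by
          rw [s13]; exact mul_nonpos_of_nonneg_of_nonpos hb0 h3.le
        exact mul_neg_of_pos_of_neg ht0 (by linarith)
      · have hbp : 0 < b := by rw [← haz] at habp; linarith
        have hlt : b * ⟪w1, w3⟫ < 0 := by rw [s13]; exact mul_neg_of_pos_of_neg hbp h3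
        have h2' : a * ⟪w1, w2⟫ ≤ 0 := by
          rw [s12]; exact mul_nonpos_of_nonneg_of_nonpos ha h2.le
        exact mul_neg_of_pos_of_neg ht0 (by linarith)
    have hcterm : (0:ℝ) ≤ c * (a * ⟪wj, w2⟫ + b * ⟪wj, w3⟫) := by
      have := mul_nonneg ha hj2.le
      have := mul_nonneg hb0 hj3.le
      have : (0:ℝ) ≤ a * ⟪wj, w2⟫ + b * ⟪wj, w3⟫ := by
        have h1' := mul_nonneg ha hj2.le
        have h2' := mul_nonneg hb0 hj3.le
        linarith
      exact mul_nonneg hcpos.le this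
    linarith [key, hnn', hrhs, hcterm]
  · -- a = b = 0, c = 1
    have haz : a = 0 := by linarith
    have hbz : b = 0 := by linarith
    rw [haz, hbz] at E2
    have hcE : c * ⟪wj, w2⟫ = t * ⟪w1, w2⟫ := by linarith
    have hlhs : 0 < c * ⟪wj, w2⟫ := mul_pos hcpos hj2
    have hrhs : t * ⟪w1, w2⟫ < 0 := by rw [s12]; exact mul_neg_of_pos_of_neg ht0 h2
    linarith
end
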